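/- Let Λ be a linear positive trace-preserving map such that Λ[ρ] is a pure state. Then for every unit vector |χ⟩ in the range of ρ, Λ[|χ⟩⟨χ|] = Λ[ρ]. -/

import Mathlib

open Matrix Kronecker BigOperators
open scoped ComplexOrder

/-- Trace distance/norm with factor 1/2: `‖A‖ = ½ tr √(AᴴA)`. -/
noncomputable def trNorm {m : Type*} [Fintype m] [DecidableEq m] (A : Matrix m m ℂ) : ℝ :=
  (1 / 2) * ((((Matrix.posSemidef_conjTranspose_mul_self A).1.eigenvectorUnitary : Matrix m m ℂ) *
      diagonal (((↑) : ℝ → ℂ) ∘ Real.sqrt ∘ (Matrix.posSemidef_conjTranspose_mul_self A).1.eigenvalues) *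
      star ((Matrix.posSemidef_conjTranspose_mul_self A).1.eigenvectorUnitary : Matrix m m ℂ)).trace).re

/-- A density operator: positive semidefinite with unit trace. -/
def IsDensity {m : Type*} [Fintype m] (ρ : Matrix m m ℂ) : Prop :=
  ρ.PosSemidef ∧ ρ.trace = 1

/-- A pure state: a density operator that is a (rank-one) projector. -/
def IsPureState {m : Type*} [Fintype m] (ρ : Matrix m m ℂ) : Prop :=
  IsDensity ρ ∧ ρ * ρ = ρ

/-- Completely positive trace-preserving map, via a Kraus representation. -/
def IsCPTP {m p : Type*} [Fintype m] [DecidableEq m] [Fintype p]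
    (Λ : Matrix m m ℂ →ₗ[ℂ] Matrix p p ℂ) : Prop :=
  ∃ (ι : Type) (s : Finset ι) (K : ι → Matrix p m ℂ),
    (∀ ρ, Λ ρ = ∑ i ∈ s, K i * ρ * (K i)ᴴ) ∧ ∑ i ∈ s, (K i)ᴴ * K i = 1

/-- Partial trace over the second (auxiliary) tensor factor. -/
noncomputable def ptraceB {m b : Type*} [Fintype b] (ρ : Matrix (m × b) (m × b) ℂ) :
    Matrix m m ℂ :=
  Matrix.of fun i j => ∑ k : b, ρ (i, k) (j, k)

/-- The projector `|χ⟩⟨χ|` onto the vector `χ`. -/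
noncomputable def pureProj {m : Type*} (χ : m → ℂ) : Matrix m m ℂ :=
  Matrix.vecMulVec χ (star χ)

/-- `χ` lies in the range of `ρ`. -/
def inRange {m : Type*} [Fintype m] (ρ : Matrix m m ℂ) (χ : m → ℂ) : Prop :=
  ∃ v, ρ *ᵥ v = χ

/-- Worst-case distinguishability: infimum of trace distances of pure states
taken from the ranges of `ρ` and `ρ'`. -/
noncomputable def wcd {m : Type*} [Fintype m] [DecidableEq m] (ρ ρ' : Matrix m m ℂ) : ℝ :=
  sInf { d : ℝ | ∃ χ χ' : m → ℂ, inRange ρ χ ∧ inRange ρ' χ' ∧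
    star χ ⬝ᵥ χ = 1 ∧ star χ' ⬝ᵥ χ' = 1 ∧ d = trNorm (pureProj χ - pureProj χ') }

/-!
Write `P = |χ⟩⟨χ|` and `Q = Λ[ρ]`. Since `χ = √ρ w` lies in the range of `ρ`, conjugating
`c |w⟩⟨w| ≤ 1` (for small `c > 0`) by `√ρ` gives `c P ≤ ρ`, and positivity of `Λ` gives
`c Λ[P] ≤ Q`. A positive operator with a positive multiple below the projection `Q` satisfies
`Λ[P] = Q Λ[P] Q ≤ Q (tr Λ[P]) Q = Q`; as both sides have trace one, their positive difference
vanishes.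
-/

open scoped MatrixOrder Matrix.Norms.L2Operator

namespace Matrix

variable {n : Type*} [Fintype n]

theorem eq_of_le_of_trace_eq {A B : Matrix n n ℂ} (hle : A ≤ B) (htr : A.trace = B.trace) :
    A = B := by
  have h := (le_iff.mp hle).trace_eq_zero_iff.mp (by rw [trace_sub, htr, sub_self])
  exact (sub_eq_zero.mp h).symm

variable [DecidableEq n]

theorem PosSemidef.le_algebraMap_trace {A : Matrix n n ℂ} (hA : A.PosSemidef) :
    A ≤ algebraMap ℝ (Matrix n n ℂ) A.trace.re := by
  refine le_algebraMap_of_spectrum_le (fun x hx => ?_) hA.isHermitian.isSelfAdjoint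
  rw [hA.isHermitian.spectrum_real_eq_range_eigenvalues] at hx
  obtain ⟨i, rfl⟩ := hx
  rw [hA.isHermitian.trace_eq_sum_eigenvalues]
  norm_cast
  exact Finset.single_le_sum (fun j _ => hA.eigenvalues_nonneg j) (Finset.mem_univ i)

theorem IsStarProjection.eq_of_smul_le {Q A : Matrix n n ℂ} (hQ : IsStarProjection Q)
    (hQtr : Q.trace = 1) (hA : 0 ≤ A) (hAtr : A.trace = 1) {c : ℝ} (hc : 0 < c)
    (hle : c • A ≤ Q) : A = Q := by
  have hconj : Q * A * Q = A := by
    have := hQ.conjugate_of_nonneg_of_le (smul_nonneg hc.le hA) hle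
    rw [mul_smul_comm, smul_mul_assoc] at this
    exact smul_right_injective _ hc.ne' this
  refine eq_of_le_of_trace_eq ?_ (by rw [hAtr, hQtr])
  calc A = star Q * A * Q := by rw [hQ.isSelfAdjoint.star_eq, hconj]
    _ ≤ star Q * algebraMap ℝ (Matrix n n ℂ) A.trace.re * Q :=
      star_left_conjugate_le_conjugate hA.posSemidef.le_algebraMap_trace Q
    _ = Q := by simp [hAtr, hQ.isSelfAdjoint.star_eq, hQ.isIdempotentElem.eq]

end Matrix

section PureProj

variable {n : Type*} [Fintype n]

theorem pureProj_mulVec (M : Matrix n n ℂ) (w : n → ℂ) :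
    pureProj (M *ᵥ w) = M * pureProj w * Mᴴ := by
  rw [pureProj, pureProj, mul_vecMulVec, vecMulVec_mul, star_mulVec, vecMul_conjTranspose]

theorem isDensity_pureProj {χ : n → ℂ} (hχ : star χ ⬝ᵥ χ = 1) : IsDensity (pureProj χ) :=
  ⟨posSemidef_vecMulVec_self_star χ, by rw [pureProj, trace_vecMulVec, dotProduct_comm, hχ]⟩

theorem IsPureState.isStarProjection {Q : Matrix n n ℂ} (hQ : IsPureState Q) :
    IsStarProjection Q :=
  ⟨hQ.2, hQ.1.1.isHermitian.isSelfAdjoint⟩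

variable [DecidableEq n]

theorem exists_pos_smul_pureProj_le {ρ : Matrix n n ℂ} (hρ : ρ.PosSemidef) {χ : n → ℂ}
    (hχ : inRange ρ χ) : ∃ c : ℝ, 0 < c ∧ c • pureProj χ ≤ ρ := by
  obtain ⟨v, rfl⟩ := hχ
  set B := CFC.sqrt ρ
  have hBB : B * B = ρ := CFC.sqrt_mul_sqrt_self ρ hρ.nonneg
  have hBH : Bᴴ = B := (CFC.sqrt_nonneg ρ).posSemidef.isHermitian
  set w := B *ᵥ v
  set r := (pureProj w).trace.re
  have hr : 0 ≤ r := (Complex.nonneg_iff.mp (posSemidef_vecMulVec_self_star w).trace_nonneg).1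
  refine ⟨(1 + r)⁻¹, by positivity, ?_⟩
  have hw : (1 + r)⁻¹ • pureProj w ≤ 1 :=
    calc (1 + r)⁻¹ • pureProj w ≤ (1 + r)⁻¹ • algebraMap ℝ (Matrix n n ℂ) r :=
          smul_le_smul_of_nonneg_left (posSemidef_vecMulVec_self_star w).le_algebraMap_trace
            (by positivity)
      _ ≤ 1 := by
          rw [Algebra.smul_def, ← map_mul, ← map_one (algebraMap ℝ (Matrix n n ℂ))]
          exact algebraMap_mono _ (inv_mul_le_one_of_le₀ (by linarith) (by positivity))
  calc (1 + r)⁻¹ • pureProj (ρ *ᵥ v) = star B * ((1 + r)⁻¹ • pureProj w) * B := by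
        rw [← hBB, ← mulVec_mulVec, pureProj_mulVec, hBH, star_eq_conjTranspose, hBH,
          mul_smul_comm, smul_mul_assoc]
    _ ≤ star B * 1 * B := star_left_conjugate_le_conjugate hw B
    _ = ρ := by rw [mul_one, star_eq_conjTranspose, hBH, hBB]

end PureProj

/-- a positive trace-preserving linear map sending `ρ` to a pure state
sends every unit vector in the range of `ρ` to the same pure state. -/
theorem pure_output_constant_on_range {n m : Type*} [Fintype n] [Fintype m]
    (Λ : Matrix n n ℂ →ₗ[ℂ] Matrix m m ℂ)
    (hpos : ∀ A : Matrix n n ℂ, A.PosSemidef → (Λ A).PosSemidef)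
    (htr : ∀ A : Matrix n n ℂ, (Λ A).trace = A.trace)
    (ρ : Matrix n n ℂ) (hρ : IsDensity ρ) (hpure : IsPureState (Λ ρ)) :
    ∀ χ : n → ℂ, inRange ρ χ → star χ ⬝ᵥ χ = 1 → Λ (pureProj χ) = Λ ρ := by
  classical
  intro χ hχ hunit
  obtain ⟨c, hc, hle⟩ := exists_pos_smul_pureProj_le hρ.1 hχ
  have hP := isDensity_pureProj hunit
  have hΛle : c • Λ (pureProj χ) ≤ Λ ρ := by
    rw [le_iff, ← LinearMap.map_smul_of_tower, ← map_sub]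
    exact hpos _ (le_iff.mp hle)
  exact hpure.isStarProjection.eq_of_smul_le hpure.1.2 (hpos _ hP.1).nonneg
    (by rw [htr, hP.2]) hc hΛle
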